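/- Let p̃, q̃ be integers with p̃ ≠ 0 and q̃ ≥ 97·|p̃|, and let u be any complex root of the quartic equation u⁴ + 8u² − 12·i·u − 4 = 0. Then every complex number t with |t − c(u)| < 51·|p̃|³/q̃ satisfies Im(t) > 0; i.e., each asymptotic disc is contained in the open upper half-plane and does not meet the real axis. -/

import Mathlib

/-! Every root of the quartic has `‖u‖ ≤ 4`, so `c(u) = i q̃² + O(|p̃| q̃ + p̃²)` and
`Im c(u) ≥ q̃² − 4|p̃|q̃ − 10p̃²`. For `q̃ ≥ 97|p̃|` this lower bound exceeds the radius
`51|p̃|³/q̃`, so the whole disc lies above the real axis. -/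

/-- The center `c(u) = i q̃² + u p̃ q̃ − ((u + i u²)/2) p̃²` of the asymptotic disc
associated with a root `u` of the quartic `u⁴ + 8u² − 12iu − 4 = 0`. -/
noncomputable def discCenter (p' q' : ℤ) (u : ℂ) : ℂ :=
  Complex.I * (q' : ℂ) ^ 2 + u * (p' : ℂ) * (q' : ℂ)
    - ((u + Complex.I * u ^ 2) / 2) * (p' : ℂ) ^ 2

open Complex

lemma norm_le_four_of_quartic_eq_zero {u : ℂ}
    (hu : u ^ 4 + 8 * u ^ 2 - 12 * I * u - 4 = 0) : ‖u‖ ≤ 4 := by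
  have hA : ‖u‖ ^ 4 ≤ 4 + 12 * ‖u‖ + 8 * ‖u‖ ^ 2 :=
    calc ‖u‖ ^ 4 = ‖4 + 12 * I * u - 8 * u ^ 2‖ := by
          rw [← norm_pow]; congr 1; linear_combination hu
      _ ≤ ‖(4 : ℂ) + 12 * I * u‖ + ‖8 * u ^ 2‖ := norm_sub_le _ _
      _ ≤ ‖(4 : ℂ)‖ + ‖12 * I * u‖ + ‖8 * u ^ 2‖ := by gcongr; exact norm_add_le _ _
      _ = 4 + 12 * ‖u‖ + 8 * ‖u‖ ^ 2 := by simp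
  by_contra! h
  -- `x⁴ − 8x² − 12x − 4 = (x − 4)(x³ + 4x² + 8x + 20) + 76`
  nlinarith [mul_pos (sub_pos.mpr h)
    (by positivity : (0 : ℝ) < ‖u‖ ^ 3 + 4 * ‖u‖ ^ 2 + 8 * ‖u‖ + 20)]

lemma norm_discCenter_sub_le (p q : ℤ) (u : ℂ) :
    ‖discCenter p q u - I * (q : ℂ) ^ 2‖
      ≤ ‖u‖ * |(p : ℝ)| * |(q : ℝ)| + (‖u‖ + ‖u‖ ^ 2) / 2 * (p : ℝ) ^ 2 :=
  calc ‖discCenter p q u - I * (q : ℂ) ^ 2‖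
        = ‖u * p * q - (u + I * u ^ 2) / 2 * (p : ℂ) ^ 2‖ := by
          rw [discCenter]; ring_nf
    _ ≤ ‖u * p * q‖ + ‖(u + I * u ^ 2) / 2 * (p : ℂ) ^ 2‖ := norm_sub_le _ _
    _ ≤ ‖u‖ * |(p : ℝ)| * |(q : ℝ)| + (‖u‖ + ‖u‖ ^ 2) / 2 * (p : ℝ) ^ 2 := by
          simp only [norm_mul, norm_div, norm_pow, norm_intCast, sq_abs, RCLike.norm_ofNat]
          gcongr
          exact (norm_add_le _ _).trans_eq (by simp)

lemma sq_sub_le_im_discCenter {u : ℂ} (hu : ‖u‖ ≤ 4) (p q : ℤ) :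
    (q : ℝ) ^ 2 - (4 * |(p : ℝ)| * |(q : ℝ)| + 10 * (p : ℝ) ^ 2) ≤ (discCenter p q u).im := by
  have h_im : (discCenter p q u - I * (q : ℂ) ^ 2).im = (discCenter p q u).im - (q : ℝ) ^ 2 := by
    simp [← ofReal_intCast, ← ofReal_pow]
  have h_lin : ‖u‖ * |(p : ℝ)| * |(q : ℝ)| ≤ 4 * |(p : ℝ)| * |(q : ℝ)| := by gcongr
  have h_sq : (‖u‖ + ‖u‖ ^ 2) / 2 * (p : ℝ) ^ 2 ≤ 10 * (p : ℝ) ^ 2 := by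
    gcongr; nlinarith [norm_nonneg u]
  linarith [neg_abs_le (discCenter p q u - I * (q : ℂ) ^ 2).im,
    abs_im_le_norm (discCenter p q u - I * (q : ℂ) ^ 2), norm_discCenter_sub_le p q u]

lemma four_mul_mul_add_ten_mul_sq_add_div_lt_sq {P Q : ℝ} (hP : 0 ≤ P) (hQ : 0 < Q)
    (hPQ : 97 * P ≤ Q) : 4 * P * Q + 10 * P ^ 2 + 51 * P ^ 3 / Q < Q ^ 2 := by
  have h_cubic : 0 < Q ^ 3 - 4 * P * Q ^ 2 - 10 * P ^ 2 * Q - 51 * P ^ 3 := by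
    nlinarith [mul_le_mul_of_nonneg_left hPQ (sq_nonneg Q),
      mul_le_mul_of_nonneg_left hPQ (mul_nonneg hP hQ.le),
      mul_le_mul_of_nonneg_left hPQ (sq_nonneg P), pow_pos hQ 3]
  have h_eq : Q ^ 2 - (4 * P * Q + 10 * P ^ 2 + 51 * P ^ 3 / Q)
      = (Q ^ 3 - 4 * P * Q ^ 2 - 10 * P ^ 2 * Q - 51 * P ^ 3) / Q := by
    field_simp; ring
  rw [← sub_pos, h_eq]
  positivity

theorem stmt_11_general (p' q' : ℤ) (hq : 97 * |p'| ≤ q') (u : ℂ)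
    (hu : u ^ 4 + 8 * u ^ 2 - 12 * Complex.I * u - 4 = 0) :
    ∀ t : ℂ, ‖t - discCenter p' q' u‖ < 51 * |(p' : ℝ)| ^ 3 / (q' : ℝ) →
      0 < t.im := by
  intro t ht
  have hq_pos : (0 : ℝ) < q' := by
    by_contra! h
    exact (norm_nonneg _).not_gt
      (ht.trans_le (div_nonpos_of_nonneg_of_nonpos (by positivity) h))
  have hpq : 97 * |(p' : ℝ)| ≤ q' := by exact_mod_cast hq
  have hc := sq_sub_le_im_discCenter (norm_le_four_of_quartic_eq_zero hu) p' q'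
  rw [abs_of_pos hq_pos, ← sq_abs (p' : ℝ)] at hc
  have hr := four_mul_mul_add_ten_mul_sq_add_div_lt_sq (abs_nonneg (p' : ℝ)) hq_pos hpq
  have ht_im : (discCenter p' q' u).im - ‖t - discCenter p' q' u‖ ≤ t.im := by
    linarith [neg_abs_le (t - discCenter p' q' u).im, abs_im_le_norm (t - discCenter p' q' u),
      sub_im t (discCenter p' q' u)]
  linarith

/-- For integers `p̃ ≠ 0`, `q̃ ≥ 97|p̃|` and any root `u` of `u⁴ + 8u² − 12iu − 4 = 0`,
every point of the open disc of radius `51|p̃|³/q̃` centered at `c(u)` has positive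
imaginary part. -/
theorem stmt_11 (p' q' : ℤ) (hp : p' ≠ 0) (hq : 97 * |p'| ≤ q') (u : ℂ)
    (hu : u ^ 4 + 8 * u ^ 2 - 12 * Complex.I * u - 4 = 0) :
    ∀ t : ℂ, ‖t - discCenter p' q' u‖ < 51 * |(p' : ℝ)| ^ 3 / (q' : ℝ) →
      0 < t.im :=
  stmt_11_general p' q' hq u hu
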